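/- arXiv:2311.17860 — 2 statements merged into one kernel-verified Lean document; each statement's English description precedes it below -/
import Mathlib

section
/- (Clique property inside a triangle.) Let V, E be a geometric graph satisfying E1–E3 and the coexistence property C1. For all points u, v, w, x, y: if E(u,v), E(v,w), E(w,u) (so u, v, w form a triangle of edges), V(x), V(y), x ≠ y, inside(u,v,w,x) and inside(u,v,w,y), then E(x,y); i.e. the vertices located in the interior of a triangle of edges form a clique. -/
/-- Points are elements of ℝ². -/
abbrev Pt := ℝ × ℝ

/-- det((a,b),(c,d)) = a·d − b·c. -/
def pdet (p q : Pt) : ℝ := p.1 * q.2 - p.2 * q.1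

/-- `left u v w`: w lies strictly to the left of the oriented line through u and v,
or on the open ray from u through v. -/
def left (u v w : Pt) : Prop :=
  0 < pdet (v - u) (w - u) ∨ ∃ t : ℝ, 0 < t ∧ w - u = t • (v - u)

/-- `inter u v w x`: the closed segments uv and wx share a point that is not an
endpoint of both. -/
def inter (u v w x : Pt) : Prop :=
  ¬(u = w ∧ v = x) ∧ ¬(u = x ∧ v = w) ∧
  ((left u v w ∧ left v u x) ∨ (left u v x ∧ left v u w)) ∧
  ((left w x u ∧ left x w v) ∨ (left w x v ∧ left x w u))

/-- `inside u v w x`: x lies in the closed triangle Δuvw but is distinct from u, v, w. -/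
def inside (u v w x : Pt) : Prop := left u v x ∧ left v w x ∧ left w u x

/-- `deleting E F u v w x`: the edge wx prohibits that uv is in F. -/
def deleting (E F : Pt → Pt → Prop) (u v w x : Pt) : Prop :=
  E u v ∧ E w x ∧ inter u v w x ∧ E u w ∧ E v w ∧
    ((¬ E u x ∧ ¬ E v x) ∨ F w x)

/-- A finite path a = p₀, p₁, …, pₙ = b with R(pᵢ, pᵢ₊₁) for all i < n. -/
def FPath (R : Pt → Pt → Prop) (a b : Pt) : Prop :=
  ∃ (n : ℕ) (p : ℕ → Pt), p 0 = a ∧ p n = b ∧ ∀ i < n, R (p i) (p (i + 1))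

/-- `R` connects `V`: any two vertices are joined by a finite `R`-path. -/
def Connects (R : Pt → Pt → Prop) (V : Pt → Prop) : Prop :=
  ∀ a b, V a → V b → FPath R a b

/-! By C1, `x` is adjacent to `u`, `v` and `w`, so it suffices that `y` is `inside` one of the
triangles `x u v`, `x v w`, `x w u`: C1 applied to that triangle gives `E x y`.

For fixed `x` and `y` the set of points `a` with `left x a y` is convex, and `x` lies in the convex
hull of `u`, `v`, `w` (the determinants are its barycentric coordinates; in the collinear case `x`
lies on a side). As `left x x y` fails, the three vertices do not all satisfy `left x a y`. The
reflection `x - (y - x)` of `y` in `x` satisfies `left x a _` whenever `y` does not, so by the same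
argument they do not all fail either. Hence, going around the triangle, some vertex `a` satisfies
`left x a y` while its successor `b` does not; then `left b x y` holds, which puts `y` inside
`x a b`. -/

lemma pdet_sub_sub_left (x a y : Pt) : pdet (x - a) (y - a) = -pdet (a - x) (y - x) := by
  simp only [pdet, Prod.fst_sub, Prod.snd_sub]; ring

lemma exists_eq_smul_of_pdet_eq_zero {p q : Pt} (hp : p ≠ 0) (h : pdet p q = 0) :
    ∃ t : ℝ, q = t • p := by
  have hn : p.1 ^ 2 + p.2 ^ 2 ≠ 0 := by
    have : p.1 ≠ 0 ∨ p.2 ≠ 0 := by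
      by_contra! h0
      exact hp (Prod.ext h0.1 h0.2)
    rcases this with h1 | h2 <;> positivity
  unfold pdet at h
  refine ⟨(p.1 * q.1 + p.2 * q.2) / (p.1 ^ 2 + p.2 ^ 2), Prod.ext ?_ ?_⟩
  · rw [Prod.smul_fst, smul_eq_mul, div_mul_eq_mul_div, eq_div_iff hn]
    linear_combination -p.2 * h
  · rw [Prod.smul_snd, smul_eq_mul, div_mul_eq_mul_div, eq_div_iff hn]
    linear_combination p.1 * h

lemma left_nonneg {a b c : Pt} (h : left a b c) : 0 ≤ pdet (b - a) (c - a) := by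
  rcases h with h | ⟨t, -, h⟩
  · exact h.le
  · simp only [h, pdet, Prod.smul_fst, Prod.smul_snd, smul_eq_mul]
    linarith

lemma exists_pos_smul_of_left {a b c : Pt} (h : left a b c) (h0 : pdet (b - a) (c - a) = 0) :
    ∃ t : ℝ, 0 < t ∧ c - a = t • (b - a) :=
  h.resolve_left h0.not_gt

lemma not_left_self {a b : Pt} (hab : a ≠ b) : ¬ left a b a := by
  rintro (h | ⟨t, ht, h⟩)
  · simp [pdet] at h
  · rw [sub_self, eq_comm, smul_eq_zero, sub_eq_zero] at h
    exact h.elim ht.ne' (Ne.symm hab)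

lemma eq_of_left_self {x y : Pt} (h : left x x y) : y = x := by
  rcases h with h | ⟨t, -, h⟩
  · simp [pdet] at h
  · rwa [sub_self, smul_zero, sub_eq_zero] at h

lemma left_iff_exists_pos_smul_sub {x a y : Pt} :
    left x a y ↔ 0 < pdet (a - x) (y - x) ∨ ∃ c : ℝ, 0 < c ∧ a - x = c • (y - x) := by
  refine or_congr Iff.rfl ⟨fun ⟨t, ht, h⟩ => ⟨t⁻¹, inv_pos.2 ht, ?_⟩,
    fun ⟨c, hc, h⟩ => ⟨c⁻¹, inv_pos.2 hc, ?_⟩⟩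
  · rw [h, smul_smul, inv_mul_cancel₀ ht.ne', one_smul]
  · rw [h, smul_smul, inv_mul_cancel₀ hc.ne', one_smul]

lemma convex_setOf_left (x y : Pt) : Convex ℝ {a | left x a y} := by
  refine convex_iff_pairwise_pos.2 fun a ha b hb _ s t hs ht hst => ?_
  simp only [Set.mem_ofPred_eq, left_iff_exists_pos_smul_sub] at ha hb ⊢
  have hsub : s • a + t • b - x = s • (a - x) + t • (b - x) := by
    linear_combination (norm := module) hst • x
  have hdet : pdet (s • a + t • b - x) (y - x)
      = s * pdet (a - x) (y - x) + t * pdet (b - x) (y - x) := by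
    rw [hsub]; simp only [pdet, Prod.fst_add, Prod.snd_add, Prod.smul_fst, Prod.smul_snd,
      smul_eq_mul]; ring
  have hray : ∀ c : ℝ, pdet (c • (y - x)) (y - x) = 0 := fun c => by
    simp only [pdet, Prod.smul_fst, Prod.smul_snd, smul_eq_mul]; ring
  rcases ha with ha | ⟨c, hc, hac⟩ <;> rcases hb with hb | ⟨c', hc', hbc⟩
  · exact Or.inl (hdet ▸ by positivity)
  · exact Or.inl (by rw [hdet, hbc, hray]; positivity)
  · exact Or.inl (by rw [hdet, hac, hray]; positivity)
  · exact Or.inr ⟨s * c + t * c', by positivity, by rw [hsub, hac, hbc]; module⟩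

lemma pdet_neg_or_exists_nonpos_smul_of_not_left {x a y : Pt} (hax : a ≠ x)
    (h : ¬ left x a y) :
    pdet (a - x) (y - x) < 0 ∨ ∃ t : ℝ, t ≤ 0 ∧ y - x = t • (a - x) := by
  simp only [left, not_or, not_exists, not_and, not_lt] at h
  rcases h.1.lt_or_eq with hlt | heq
  · exact Or.inl hlt
  · obtain ⟨t, ht⟩ := exists_eq_smul_of_pdet_eq_zero (sub_ne_zero.2 hax) heq
    exact Or.inr ⟨t, not_lt.1 fun htpos => h.2 t htpos ht, ht⟩

lemma left_of_not_left {x a y : Pt} (hax : a ≠ x) (h : ¬ left x a y) : left a x y := by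
  rcases pdet_neg_or_exists_nonpos_smul_of_not_left hax h with hlt | ⟨t, ht, hyx⟩
  · exact Or.inl (by rw [pdet_sub_sub_left]; linarith)
  · refine Or.inr ⟨1 - t, by linarith, ?_⟩
    rw [show y - a = (y - x) - (a - x) by abel, hyx]; module

lemma left_reflection_of_not_left {x a y : Pt} (hax : a ≠ x) (hyx : y ≠ x)
    (h : ¬ left x a y) : left x a (x - (y - x)) := by
  unfold left
  rw [sub_sub_cancel_left]
  rcases pdet_neg_or_exists_nonpos_smul_of_not_left hax h with hlt | ⟨t, ht, hyx'⟩
  · refine Or.inl ?_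
    simp only [pdet, Prod.fst_neg, Prod.snd_neg] at hlt ⊢
    linarith
  · have ht0 : t ≠ 0 := by
      rintro rfl
      exact hyx (sub_eq_zero.1 (by simpa using hyx'))
    exact Or.inr ⟨-t, neg_pos.2 (ht.lt_of_ne ht0), by rw [hyx', neg_smul]⟩

lemma mem_segment_of_sub_eq_smul {u v x : Pt} {p : ℝ} (h0 : 0 ≤ p) (h1 : p ≤ 1)
    (h : x - u = p • (v - u)) : x ∈ segment ℝ u v := by
  rw [segment_eq_image']
  exact ⟨p, ⟨h0, h1⟩, by simp only; rw [← h]; abel⟩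

lemma smul_add_smul_add_smul_mem_convexHull {E : Type*} [AddCommGroup E] [Module ℝ E]
    {a b c : ℝ} (ha : 0 ≤ a) (hb : 0 ≤ b) (hc : 0 ≤ c) (habc : a + b + c = 1) (u v w : E) :
    a • u + b • v + c • w ∈ convexHull ℝ {u, v, w} := by
  have := (convex_convexHull ℝ ({u, v, w} : Set E)).sum_mem (t := Finset.univ)
    (w := ![a, b, c]) (z := ![u, v, w]) (by simp [Fin.forall_fin_succ, *])
    (by simp [Fin.sum_univ_three, habc])
    fun i _ => subset_convexHull ℝ _ (by fin_cases i <;> simp)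
  simpa [Fin.sum_univ_three] using this

-- Cramer's rule: the three determinants are the barycentric coordinates of `x`, up to scaling.
lemma pdet_smul_add_pdet_smul_add_pdet_smul (u v w x : Pt) :
    pdet (w - v) (x - v) • u + pdet (u - w) (x - w) • v + pdet (v - u) (x - u) • w
      = (pdet (w - v) (x - v) + pdet (u - w) (x - w) + pdet (v - u) (x - u)) • x := by
  ext <;> simp only [pdet, Prod.fst_add, Prod.snd_add, Prod.smul_fst, Prod.smul_snd,
    Prod.fst_sub, Prod.snd_sub, smul_eq_mul] <;> ring

lemma mem_convexHull_of_inside {u v w x : Pt} (h : inside u v w x) :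
    x ∈ convexHull ℝ {u, v, w} := by
  obtain ⟨huv, hvw, hwu⟩ := h
  set α := pdet (w - v) (x - v)
  set β := pdet (u - w) (x - w)
  set γ := pdet (v - u) (x - u)
  have hα : 0 ≤ α := left_nonneg hvw
  have hβ : 0 ≤ β := left_nonneg hwu
  have hγ : 0 ≤ γ := left_nonneg huv
  rcases (add_nonneg (add_nonneg hα hβ) hγ).eq_or_lt with hS | hS
  · obtain ⟨p, hp, hpx⟩ := exists_pos_smul_of_left huv (by linarith)
    obtain ⟨q, hq, hqx⟩ := exists_pos_smul_of_left hvw (by linarith)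
    obtain ⟨r, hr, hrx⟩ := exists_pos_smul_of_left hwu (by linarith)
    by_cases hp1 : p ≤ 1
    · exact segment_subset_convexHull (by simp) (by simp)
        (mem_segment_of_sub_eq_smul hp.le hp1 hpx)
    by_cases hq1 : q ≤ 1
    · exact segment_subset_convexHull (by simp) (by simp)
        (mem_segment_of_sub_eq_smul hq.le hq1 hqx)
    by_cases hr1 : r ≤ 1
    · exact segment_subset_convexHull (by simp) (by simp)
        (mem_segment_of_sub_eq_smul hr.le hr1 hrx)
    -- Otherwise `v` lies strictly between `u` and `x`, `w` between `v` and `x` and `u` between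
    -- `w` and `x`, which forces `x = u`.
    have hcycle : ((p - 1) * (q - 1) * (r - 1) - p * q * r) • (u - x) = 0 := by
      linear_combination (norm := module)
        ((q - 1) * (r - 1)) • hpx + (p * (r - 1)) • hqx + (p * q) • hrx
    have hcoef : (p - 1) * (q - 1) * (r - 1) - p * q * r ≠ 0 := by
      rw [not_le] at hp1 hq1 hr1
      nlinarith [mul_pos (sub_pos.2 hp1) (sub_pos.2 hq1), mul_pos hp hq]
    rw [smul_eq_zero_iff_right hcoef, sub_eq_zero] at hcycle
    exact subset_convexHull ℝ _ (by simp [hcycle])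
  · have hx : x = (α / (α + β + γ)) • u + (β / (α + β + γ)) • v
        + (γ / (α + β + γ)) • w := by
      rw [div_eq_inv_mul, div_eq_inv_mul, div_eq_inv_mul, mul_smul, mul_smul, mul_smul,
        ← smul_add, ← smul_add, pdet_smul_add_pdet_smul_add_pdet_smul, smul_smul,
        inv_mul_cancel₀ hS.ne', one_smul]
    rw [hx]
    refine smul_add_smul_add_smul_mem_convexHull (by positivity) (by positivity) (by positivity)
      ?_ u v w
    field_simp

lemma not_left_all_of_mem_convexHull {u v w x y : Pt} (hx : x ∈ convexHull ℝ {u, v, w})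
    (hyx : y ≠ x) : ¬ (left x u y ∧ left x v y ∧ left x w y) := by
  rintro ⟨hu, hv, hw⟩
  have hsub : ({u, v, w} : Set Pt) ⊆ {a | left x a y} := by
    simp only [Set.insert_subset_iff, Set.singleton_subset_iff]
    exact ⟨hu, hv, hw⟩
  exact hyx (eq_of_left_self (convexHull_min hsub (convex_setOf_left x y) hx))

lemma inside_or_inside_or_inside {u v w x y : Pt} (huv : u ≠ v) (hvw : v ≠ w) (hwu : w ≠ u)
    (hx : inside u v w x) (hy : inside u v w y) (hxy : x ≠ y) :
    inside x u v y ∨ inside x v w y ∨ inside x w u y := by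
  have hux : u ≠ x := fun h => not_left_self huv (h ▸ hx.1)
  have hvx : v ≠ x := fun h => not_left_self hvw (h ▸ hx.2.1)
  have hwx : w ≠ x := fun h => not_left_self hwu (h ▸ hx.2.2)
  have hull := mem_convexHull_of_inside hx
  have hyx := hxy.symm
  have not_all := not_left_all_of_mem_convexHull hull hyx
  have not_none : ¬ (¬ left x u y ∧ ¬ left x v y ∧ ¬ left x w y) := fun ⟨hu, hv, hw⟩ =>
    not_left_all_of_mem_convexHull hull (by simpa [sub_eq_zero] using hyx)
      ⟨left_reflection_of_not_left hux hyx hu, left_reflection_of_not_left hvx hyx hv,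
        left_reflection_of_not_left hwx hyx hw⟩
  obtain ⟨hyu, hyv, hyw⟩ := hy
  by_cases pu : left x u y
  · by_cases pv : left x v y
    · by_cases pw : left x w y
      · exact absurd ⟨pu, pv, pw⟩ not_all
      · exact Or.inr (Or.inl ⟨pv, hyv, left_of_not_left hwx pw⟩)
    · exact Or.inl ⟨pu, hyu, left_of_not_left hvx pv⟩
  · by_cases pw : left x w y
    · exact Or.inr (Or.inr ⟨pw, hyw, left_of_not_left hux pu⟩)
    · by_cases pv : left x v y
      · exact Or.inr (Or.inl ⟨pv, hyv, left_of_not_left hwx pw⟩)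
      · exact absurd ⟨pu, pv, pw⟩ not_none

theorem clique_inside_triangle_general
    (V : Pt → Prop) (E : Pt → Pt → Prop)
    (hE1 : ∀ u, ¬ E u u)
    (hE2 : ∀ u v, E u v → E v u)
    (hC1 : ∀ u v w x, inside u v w x ∧ E u v ∧ E v w ∧ E w u ∧ V x → E u x)
    (u v w x y : Pt)
    (huv : E u v) (hvw : E v w) (hwu : E w u)
    (hVx : V x) (hVy : V y) (hxy : x ≠ y)
    (hx : inside u v w x) (hy : inside u v w y) :
    E x y := by
  have hne : ∀ a b, E a b → a ≠ b := fun a b hab h => hE1 b (h ▸ hab)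
  have hux : E u x := hC1 u v w x ⟨hx, huv, hvw, hwu, hVx⟩
  have hvx : E v x := hC1 v w u x ⟨⟨hx.2.1, hx.2.2, hx.1⟩, hvw, hwu, huv, hVx⟩
  have hwx : E w x := hC1 w u v x ⟨⟨hx.2.2, hx.1, hx.2.1⟩, hwu, huv, hvw, hVx⟩
  rcases inside_or_inside_or_inside (hne _ _ huv) (hne _ _ hvw) (hne _ _ hwu) hx hy hxy
    with h | h | h
  · exact hC1 x u v y ⟨h, hE2 u x hux, huv, hvx, hVy⟩
  · exact hC1 x v w y ⟨h, hE2 v x hvx, hvw, hwx, hVy⟩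
  · exact hC1 x w u y ⟨h, hE2 w x hwx, hwu, hux, hVy⟩

theorem clique_inside_triangle
    (V : Pt → Prop) (E : Pt → Pt → Prop)
    (hE1 : ∀ u, ¬ E u u)
    (hE2 : ∀ u v, E u v → E v u)
    (hE3 : ∀ u v, E u v → V u ∧ V v)
    (hC1 : ∀ u v w x, inside u v w x ∧ E u v ∧ E v w ∧ E w u ∧ V x → E u x)
    (u v w x y : Pt)
    (huv : E u v) (hvw : E v w) (hwu : E w u)
    (hVx : V x) (hVy : V y) (hxy : x ≠ y)
    (hx : inside u v w x) (hy : inside u v w y) :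
    E x y :=
  clique_inside_triangle_general V E hE1 hE2 hC1 u v w x y huv hvw hwu hVx hVy hxy hx hy
end

section
/- (Proof Step 8b: no cycle of length 2.) Let V, E satisfy E1–E3, R1 and C1, and let F satisfy F1–F6. For all points u1, v1, w1, x1, x2: it is impossible that deleting(u1,v1,w1,x1), F(w1,x1), deleting(v1,w1,u1,x2) and F(u1,x2) all hold simultaneously. -/
/-!
Write `orient a b c := pdet (b - a) (c - a)`. No vertex lies strictly inside an `F`-edge (F4), so
the crossings of `u1v1` with `w1x1` and of `v1w1` with `u1x2` are proper. If `u1v1w1` is a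
nondegenerate triangle, `w1x1` and `u1x2` are cevians through the opposite sides, and two
Grassmann–Plücker relations show that they cross, contradicting F3. If `u1, v1, w1` are
collinear, the first crossing puts `w1` strictly between `u1` and `v1` and the second puts `u1`
strictly between `v1` and `w1`, which is absurd.
-/

def orient (a b c : Pt) : ℝ := pdet (b - a) (c - a)

section Orient

variable {a b c p q r : Pt} {t : ℝ}

@[simp]
lemma orient_self_left (a b : Pt) : orient a b a = 0 := by
  simp [orient, pdet]

@[simp]
lemma orient_self_right (a b : Pt) : orient a b b = 0 := by
  simp only [orient, pdet]; ring

lemma orient_swap (a b c : Pt) : orient b a c = -orient a b c := by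
  simp only [orient, pdet, Prod.fst_sub, Prod.snd_sub]; ring

lemma orient_rotate (a b c : Pt) : orient b c a = orient a b c := by
  simp only [orient, pdet, Prod.fst_sub, Prod.snd_sub]; ring

lemma orient_sub_orient (a b c d : Pt) :
    orient c d a - orient c d b = orient a b d - orient a b c := by
  simp only [orient, pdet, Prod.fst_sub, Prod.snd_sub]; ring

lemma orient_of_sub_eq_smul (h : p - q = t • (r - q)) :
    orient a b p = (1 - t) * orient a b q + t * orient a b r := by
  have h₁ := congrArg Prod.fst h
  have h₂ := congrArg Prod.snd h
  simp only [Prod.fst_sub, Prod.snd_sub, Prod.smul_fst, Prod.smul_snd, smul_eq_mul] at h₁ h₂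
  simp only [orient, pdet, Prod.fst_sub, Prod.snd_sub]
  linear_combination (a.2 - b.2) * h₁ - (a.1 - b.1) * h₂

lemma orient_eq_zero_of_sub_eq_smul (h : c - a = t • (b - a)) : orient a b c = 0 := by
  simp [orient_of_sub_eq_smul h]

lemma exists_sub_eq_smul_of_orient_eq_zero (hab : a ≠ b) (h : orient a b c = 0) :
    ∃ t : ℝ, c - a = t • (b - a) := by
  simp only [orient, pdet, Prod.fst_sub, Prod.snd_sub] at h
  by_cases h₁ : b.1 - a.1 = 0
  · have h₂ : b.2 - a.2 ≠ 0 := fun h₂ => hab (Prod.ext (by linarith) (by linarith))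
    refine ⟨(c.2 - a.2) / (b.2 - a.2), Prod.ext ?_ ?_⟩ <;>
      simp only [Prod.fst_sub, Prod.snd_sub, Prod.smul_fst, Prod.smul_snd, smul_eq_mul] <;>
      field_simp
    linear_combination -h
  · refine ⟨(c.1 - a.1) / (b.1 - a.1), Prod.ext ?_ ?_⟩ <;>
      simp only [Prod.fst_sub, Prod.snd_sub, Prod.smul_fst, Prod.smul_snd, smul_eq_mul] <;>
      field_simp
    linear_combination h

end Orient

section Left

variable {a b c d : Pt} {t : ℝ}

lemma left_iff_orient :
    left a b c ↔ 0 < orient a b c ∨ ∃ t : ℝ, 0 < t ∧ c - a = t • (b - a) :=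
  Iff.rfl

lemma left.orient_nonneg (h : left a b c) : 0 ≤ orient a b c := by
  rcases h with h | ⟨t, -, h⟩
  · exact h.le
  · exact (orient_eq_zero_of_sub_eq_smul h).ge

lemma eq_of_left_self_s17 (h : left a b a) : a = b := by
  rcases h with h | ⟨t, ht, h⟩
  · exact absurd h (orient_self_left a b).not_gt
  · rw [sub_self, eq_comm, smul_eq_zero] at h
    exact (sub_eq_zero.1 (h.resolve_left ht.ne')).symm

lemma left_of_sbtw (h : Sbtw ℝ a c b) : left a b c := by
  obtain ⟨t, ⟨ht, -⟩, rfl⟩ := h.mem_image_Ioo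
  exact Or.inr ⟨t, ht, by rw [AffineMap.lineMap_apply_module']; abel⟩

lemma sbtw_of_sub_eq_smul (hab : a ≠ b) (h : c - a = t • (b - a)) (ht₀ : 0 < t) (ht₁ : t < 1) :
    Sbtw ℝ a c b :=
  sbtw_iff_mem_image_Ioo_and_ne.2
    ⟨⟨t, ⟨ht₀, ht₁⟩, by rw [AffineMap.lineMap_apply_module', ← h, sub_add_cancel]⟩, hab⟩

lemma sbtw_of_sub_eq_smul_of_neg (hac : a ≠ c) (h : b - c = t • (a - c)) (ht : t < 0) :
    Sbtw ℝ a c b := by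
  refine sbtw_iff_left_ne_and_right_mem_image_Ioi.2 ⟨hac, 1 - t, by simp; linarith, ?_⟩
  rw [AffineMap.lineMap_apply_module', sub_smul, one_smul, ← neg_sub a c, smul_neg, ← h]
  abel

lemma inter_of_crossing (h₁ : orient a b c < 0) (h₂ : 0 < orient a b d)
    (h₃ : 0 < orient c d a) (h₄ : orient c d b < 0) : inter a b c d := by
  refine ⟨?_, ?_, Or.inr ⟨Or.inl h₂, Or.inl ?_⟩, Or.inl ⟨Or.inl h₃, Or.inl ?_⟩⟩
  · rintro ⟨rfl, -⟩
    simp at h₁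
  · rintro ⟨rfl, -⟩
    simp at h₂
  · change 0 < orient b a c
    linarith [orient_swap a b c]
  · change 0 < orient d c b
    linarith [orient_swap c d b]

lemma inter.swap (h : inter a b c d) : inter b a c d := by
  obtain ⟨h₁, h₂, h₃, h₄⟩ := h
  exact ⟨fun ⟨p, q⟩ => h₂ ⟨q, p⟩, fun ⟨p, q⟩ => h₁ ⟨q, p⟩, (h₃.imp And.symm And.symm).symm,
    h₄.symm⟩

end Left

section Crossing

variable {a b c d u v w x y : Pt}

lemma orient_signs_of_inter (hc : 0 < orient a b c) (hcd : c ≠ d) (hI : inter a b c d)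
    (ha : ¬ Sbtw ℝ c a d) (hb : ¬ Sbtw ℝ c b d) :
    orient a b d ≤ 0 ∧ orient c d a < 0 ∧ 0 < orient c d b := by
  obtain ⟨-, -, h₃, h₄⟩ := hI
  have hbac : ¬ left b a c := fun h => by linarith [h.orient_nonneg, orient_swap a b c]
  have hbad : left b a d := h₃.elim (·.2) fun h => absurd h.2 hbac
  have hd : orient a b d ≤ 0 := by linarith [hbad.orient_nonneg, orient_swap a b d]
  have hlt : orient c d a < orient c d b := by linarith [orient_sub_orient a b c d]
  rcases h₄ with ⟨hcda, hdcb⟩ | ⟨hcdb, hdca⟩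
  · linarith [hcda.orient_nonneg, hdcb.orient_nonneg, orient_swap c d b]
  refine ⟨hd, ?_, ?_⟩
  · rcases left_iff_orient.1 hdca with h | ⟨t, ht, h⟩
    · linarith [orient_swap c d a]
    have key := orient_of_sub_eq_smul (a := a) (b := b) h
    rw [orient_self_left] at key
    have ht₁ : 1 ≤ t :=
      not_lt.1 fun ht₁ => ha (sbtw_comm.1 (sbtw_of_sub_eq_smul hcd.symm h ht ht₁))
    nlinarith
  · rcases left_iff_orient.1 hcdb with h | ⟨t, ht, h⟩
    · exact h
    have key := orient_of_sub_eq_smul (a := a) (b := b) h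
    rw [orient_self_right] at key
    have ht₁ : 1 ≤ t := not_lt.1 fun ht₁ => hb (sbtw_of_sub_eq_smul hcd h ht ht₁)
    rcases ht₁.lt_or_eq with ht₁ | rfl
    · nlinarith
    · rw [one_smul, sub_left_inj] at h
      subst h
      rw [← eq_of_left_self_s17 hbad] at hc
      simp [orient, pdet] at hc

lemma inter_of_inter_of_inter (hw : 0 < orient u v w) (hwx : w ≠ x) (huy : u ≠ y)
    (hI₁ : inter u v w x) (hI₂ : inter v w u y) (hu : ¬ Sbtw ℝ w u x) (hv : ¬ Sbtw ℝ w v x)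
    (hv' : ¬ Sbtw ℝ u v y) (hw' : ¬ Sbtw ℝ u w y) : inter w x u y := by
  obtain ⟨hx, hwxu, hwxv⟩ := orient_signs_of_inter hw hwx hI₁ hu hv
  obtain ⟨hy, huyv, huyw⟩ :=
    orient_signs_of_inter (by rwa [orient_rotate]) huy hI₂ hv' hw'
  -- two Grassmann–Plücker relations
  have e₁ : orient w x y * orient u v w =
      orient w x u * orient v w y + orient w x v * orient u y w := by
    simp only [orient, pdet, Prod.fst_sub, Prod.snd_sub]; ring
  have e₂ : orient u y x * orient u v w =
      orient u v x * orient u y w - orient w x u * orient u y v := by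
    simp only [orient, pdet, Prod.fst_sub, Prod.snd_sub]; ring
  have hwxy : 0 < orient w x y := pos_of_mul_pos_left (by rw [e₁]; nlinarith) hw.le
  have huyx : orient u y x < 0 := by
    have : orient u y x * orient u v w < 0 := by rw [e₂]; nlinarith
    exact neg_of_mul_neg_left this hw.le
  exact inter_of_crossing hwxu hwxy huyw huyx

lemma sbtw_of_left_of_left (hac : a ≠ c) (hbc : b ≠ c) (hcd : c ≠ d) (h : orient c a b = 0)
    (hcda : left c d a) (hdcb : left d c b) (ha : ¬ Sbtw ℝ c a d) (hb : ¬ Sbtw ℝ c b d) :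
    Sbtw ℝ a c b := by
  obtain ⟨s, hs⟩ := exists_sub_eq_smul_of_orient_eq_zero hac.symm h
  have hs₀ : s ≠ 0 := by
    rintro rfl
    exact hbc (sub_eq_zero.1 (by simpa using hs))
  refine sbtw_of_sub_eq_smul_of_neg hac hs (lt_of_le_of_ne (not_lt.1 fun hs₁ => ?_) hs₀)
  have hob := orient_of_sub_eq_smul (a := c) (b := d) hs
  simp only [orient_self_left, mul_zero, zero_add] at hob
  rcases left_iff_orient.1 hcda with hcda | ⟨t, ht, hat⟩
  · nlinarith [hdcb.orient_nonneg, orient_swap c d b]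
  have ht₁ : 1 ≤ t := not_lt.1 fun ht₁ => ha (sbtw_of_sub_eq_smul hcd hat ht ht₁)
  rw [orient_eq_zero_of_sub_eq_smul hat, mul_zero] at hob
  obtain ⟨r, hr, hbr⟩ := (left_iff_orient.1 hdcb).resolve_left
    fun h => by linarith [orient_swap c d b]
  have hr₁ : 1 ≤ r :=
    not_lt.1 fun hr₁ => hb (sbtw_comm.1 (sbtw_of_sub_eq_smul hcd.symm hbr hr hr₁))
  have hst : (s * t) • (d - c) = (1 - r) • (d - c) :=
    calc (s * t) • (d - c) = b - c := by rw [mul_smul, ← hat, hs]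
      _ = (1 - r) • (d - c) := by rw [← sub_add_sub_cancel b d c, hbr]; module
  have := smul_left_injective ℝ (sub_ne_zero.2 hcd.symm) hst
  nlinarith

lemma sbtw_of_inter_of_orient_eq_zero (hac : a ≠ c) (hbc : b ≠ c) (hcd : c ≠ d)
    (h : orient a b c = 0) (hI : inter a b c d) (ha : ¬ Sbtw ℝ c a d) (hb : ¬ Sbtw ℝ c b d) :
    Sbtw ℝ a c b := by
  rcases hI.2.2.2 with ⟨hcda, hdcb⟩ | ⟨hcdb, hdca⟩
  · exact sbtw_of_left_of_left hac hbc hcd (by rwa [← orient_rotate c a b]) hcda hdcb ha hb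
  · refine sbtw_comm.1 (sbtw_of_left_of_left hbc hac hcd ?_ hcdb hdca hb ha)
    rw [orient_swap, orient_rotate, h, neg_zero]

end Crossing

theorem proof_step8b_general
    (V : Pt → Prop) (E F : Pt → Pt → Prop)
    (hE1 : ∀ u, ¬ E u u)
    (hE3 : ∀ u v, E u v → V u ∧ V v)
    (hF3 : ∀ u v w x, F u v ∧ F w x → ¬ inter u v w x)
    (hF4 : ∀ u v w, left u v w ∧ left v u w ∧ V w → ¬ F u v)
    (u1 v1 w1 x1 x2 : Pt)
    (h1 : deleting E F u1 v1 w1 x1)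
    (h2 : F w1 x1)
    (h3 : deleting E F v1 w1 u1 x2)
    (h4 : F u1 x2) :
    False := by
  obtain ⟨hEuv, hEwx, hI₁, hEuw, hEvw, -⟩ := h1
  obtain ⟨-, hEuy, hI₂, -, -, -⟩ := h3
  have hne : ∀ {p q}, E p q → p ≠ q := fun h hpq => hE1 _ (hpq ▸ h)
  have hF : ∀ {p q r}, F p q → V r → ¬ Sbtw ℝ p r q := fun hpq hr hs =>
    hF4 _ _ _ ⟨left_of_sbtw hs, left_of_sbtw (sbtw_comm.1 hs), hr⟩ hpq
  obtain ⟨hVu, hVv⟩ := hE3 _ _ hEuv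
  have hVw := (hE3 _ _ hEvw).2
  rcases lt_trichotomy (orient u1 v1 w1) 0 with hO | hO | hO
  · refine hF3 _ _ _ _ ⟨h4, h2⟩ (inter_of_inter_of_inter ?_ (hne hEuy) (hne hEwx) hI₂.swap
      hI₁.swap (hF h4 hVw) (hF h4 hVv) (hF h2 hVv) (hF h2 hVu))
    linarith [orient_swap v1 w1 u1, orient_rotate u1 v1 w1]
  · exact (sbtw_of_inter_of_orient_eq_zero (hne hEuw) (hne hEvw) (hne hEwx) hO hI₁
      (hF h2 hVu) (hF h2 hVv)).not_rotate
      (sbtw_of_inter_of_orient_eq_zero (hne hEuv).symm (hne hEuw).symm (hne hEuy)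
        (by rw [orient_rotate, hO]) hI₂ (hF h4 hVv) (hF h4 hVw)).wbtw
  · exact hF3 _ _ _ _ ⟨h2, h4⟩ (inter_of_inter_of_inter hO (hne hEwx) (hne hEuy) hI₁ hI₂
      (hF h2 hVu) (hF h2 hVv) (hF h4 hVv) (hF h4 hVw))

theorem proof_step8b
    (V : Pt → Prop) (E F : Pt → Pt → Prop)
    (hE1 : ∀ u, ¬ E u u)
    (hE2 : ∀ u v, E u v → E v u)
    (hE3 : ∀ u v, E u v → V u ∧ V v)
    (hR1 : ∀ u v w x, E u v ∧ E w x ∧ inter u v w x → E u w ∨ E v x)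
    (hC1 : ∀ u v w x, inside u v w x ∧ E u v ∧ E v w ∧ E w u ∧ V x → E u x)
    (hF1 : ∀ u v, F u v → F v u)
    (hF2 : ∀ u v, F u v → E u v)
    (hF3 : ∀ u v w x, F u v ∧ F w x → ¬ inter u v w x)
    (hF4 : ∀ u v w, left u v w ∧ left v u w ∧ V w → ¬ F u v)
    (hF5 : ∀ u v w x, F u v ∧ E w x ∧ inter u v w x → E u w ∨ E v w)
    (hF6 : ∀ u v w x, F u v ∧ E w x ∧ inter u v w x → E u x ∨ E v x)
    (u1 v1 w1 x1 x2 : Pt)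
    (h1 : deleting E F u1 v1 w1 x1)
    (h2 : F w1 x1)
    (h3 : deleting E F v1 w1 u1 x2)
    (h4 : F u1 x2) :
    False :=
  proof_step8b_general V E F hE1 hE3 hF3 hF4 u1 v1 w1 x1 x2 h1 h2 h3 h4
end
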